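/- arXiv:1409.1289 — 4 statements merged into one kernel-verified Lean document; each statement's English description precedes it below -/
import Mathlib

section
/- Let G be a left-ordered group and g₁, …, gₙ nonidentity elements of G. Then there exist signs ε₁, …, εₙ ∈ {-1, 1} such that every non-empty product (with repetitions allowed) of elements from the set {g₁^{ε₁}, …, gₙ^{εₙ}} is not equal to the identity. -/
/-!
Choose each sign so that `g i ^ ε i` is positive, i.e. `1 < g i ^ ε i`; this is possible because
in a left-ordered group `a < 1` forces `1 < a⁻¹`. By left invariance a product of positive
elements is positive, hence never the identity.
-/

theorem List.one_lt_prod_of_forall_one_lt {M : Type*} [Monoid M] [Preorder M] [MulLeftMono M] :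
    ∀ l : List M, (∀ x ∈ l, 1 < x) → l ≠ [] → 1 < l.prod
  | [], _, hl => (hl rfl).elim
  | [a], h, _ => by simpa using h
  | a :: b :: l, h, _ => by
    rw [List.prod_cons]
    exact Left.one_lt_mul_of_lt_of_le (h a List.mem_cons_self)
      ((b :: l).one_lt_prod_of_forall_one_lt (fun x hx => h x (List.mem_cons_of_mem a hx))
        (List.cons_ne_nil b l)).le

theorem one_lt_zpow_ite {G : Type*} [Group G] [LinearOrder G] [MulLeftMono G] {a : G}
    (ha : a ≠ 1) : 1 < a ^ (if 1 < a then (1 : ℤ) else -1) := by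
  split_ifs with h
  · simpa using h
  · simpa using lt_of_le_of_ne (not_lt.1 h) ha

/-- In a left-ordered group, for nonidentity elements `g 1, …, g n` there exist
signs `ε i ∈ {-1,1}` such that every non-empty product (with repetitions) of
the elements `g i ^ ε i` is non-trivial. -/
theorem stmt_3 {G : Type*} [Group G] [LinearOrder G]
    (hleft : ∀ g₁ g₂ h : G, g₁ ≤ g₂ → h * g₁ ≤ h * g₂)
    (n : ℕ) (g : Fin n → G) (hg : ∀ i, g i ≠ 1) :
    ∃ ε : Fin n → ℤ, (∀ i, ε i = -1 ∨ ε i = 1) ∧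
      ∀ l : List (Fin n), l ≠ [] → (l.map fun i => g i ^ ε i).prod ≠ 1 := by
  have : MulLeftMono G := ⟨fun h _ _ hab => hleft _ _ h hab⟩
  refine ⟨fun i => if 1 < g i then 1 else -1, fun _ => (ite_eq_or_eq _ _ _).symm, fun l hl => ?_⟩
  refine (List.one_lt_prod_of_forall_one_lt _ ?_ (by simpa using hl)).ne'
  exact List.forall_mem_map.2 fun i _ => one_lt_zpow_ite (hg i)
end

section
/- Let G = ⟨S | R⟩ with S = {a₁,…,aₙ}, and suppose R intersects the language of every ½-large b-automaton over S. Then G is either trivial or not left-orderable. -/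
/-!
Fix a left-invariant linear order on `G = ⟨S | R⟩ ≠ 1`. Some generator `a` is not `1`, so `a` or
`a⁻¹` is `> 1`, and for every generator `a` one of `a`, `a⁻¹` is `≥ 1`. Hence the b-automaton that
starts with a letter `> 1` and then accepts every letter `≥ 1` is ½-large. A word it accepts is a
product `p * q₁ * ⋯ * qₖ` with `p > 1` and `qᵢ ≥ 1`, which is `> 1` by left invariance, so it is
not a relator.
-/

/-- Letters over an alphabet of size `n`: a generator index together with a sign. -/
abbrev Letter (n : ℕ) := Fin n × Bool

/-- A b-automaton over an alphabet of size `n`. -/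
abbrev BAut (n : ℕ) := Finset (Letter n) × (Letter n → Finset (Letter n))

/-- Membership of a word in the language of a b-automaton. -/
def InLang {n : ℕ} (A : BAut n) (w : List (Letter n)) : Prop :=
  w ≠ [] ∧ (∀ a ∈ w.head?, a ∈ A.1) ∧ List.Chain' (fun s s' => s' ∈ A.2 s) w

/-- A b-automaton is `½`-large if `σ_∅ ≠ ∅` and `|σ_s| ≥ n` for every letter `s`. -/
def HalfLarge {n : ℕ} (A : BAut n) : Prop :=
  A.1.Nonempty ∧ ∀ s : Letter n, n ≤ (A.2 s).card

/-- The element of the free group on `n` generators represented by a word. -/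
def toFree {n : ℕ} (w : List (Letter n)) : FreeGroup (Fin n) :=
  (w.map fun s => if s.2 then FreeGroup.of s.1 else (FreeGroup.of s.1)⁻¹).prod

/-- A group is left-orderable if it admits a left-invariant linear order. -/
def LeftOrderable (G : Type*) [Group G] : Prop :=
  ∃ le : G → G → Prop, IsLinearOrder G le ∧
    ∀ g₁ g₂ h : G, le g₁ g₂ → le (h * g₁) (h * g₂)

theorem LeftOrderable.exists_linearOrder {G : Type*} [Group G] (h : LeftOrderable G) :
    ∃ _ : LinearOrder G, MulLeftMono G := by
  obtain ⟨le, hlin, hinv⟩ := h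
  let inst : LinearOrder G :=
    { le := le
      le_refl := refl_of le
      le_trans := fun _ _ _ => trans_of le
      le_antisymm := fun _ _ => antisymm_of le
      le_total := total_of le
      toDecidableLE := Classical.decRel le }
  exact ⟨inst, ⟨fun h _ _ hab => hinv _ _ h hab⟩⟩

theorem PresentedGroup.exists_of_ne_one {α : Type*} {rels : Set (FreeGroup α)}
    (h : ∃ g : PresentedGroup rels, g ≠ 1) :
    ∃ i, (PresentedGroup.of i : PresentedGroup rels) ≠ 1 := by
  contrapose! h
  exact fun g => Subgroup.mem_bot.mp (PresentedGroup.generated_by rels ⊥ h g)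

theorem List.forall_mem_of_isChain_cons_const {α : Type*} {p : α → Prop} :
    ∀ {a : α} {l : List α}, List.IsChain (fun _ b => p b) (a :: l) → ∀ b ∈ l, p b
  | _, [], _ => by simp
  | _, _ :: _, h => by
    rw [List.isChain_cons_cons] at h
    exact List.forall_mem_cons.mpr ⟨h.1, List.forall_mem_of_isChain_cons_const h.2⟩

theorem exists_cons_of_inLang_const {n : ℕ} {σ₀ σ : Finset (Letter n)} {w : List (Letter n)}
    (hw : InLang (σ₀, fun _ => σ) w) : ∃ s t, w = s :: t ∧ s ∈ σ₀ ∧ ∀ x ∈ t, x ∈ σ := by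
  obtain ⟨hne, hhead, hchain⟩ := hw
  obtain ⟨s, t, rfl⟩ := List.exists_cons_of_ne_nil hne
  exact ⟨s, t, rfl, hhead s rfl, List.forall_mem_of_isChain_cons_const hchain⟩

section LetterValue

variable {G : Type*} [Group G] {n : ℕ}

def letterVal (x : Fin n → G) (s : Letter n) : G :=
  if s.2 then x s.1 else (x s.1)⁻¹

theorem map_toFree (f : FreeGroup (Fin n) →* G) (w : List (Letter n)) :
    f (toFree w) = (w.map (letterVal (f ∘ FreeGroup.of))).prod := by
  rw [toFree, map_list_prod, List.map_map]
  congr 1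
  refine List.map_congr_left fun ⟨i, b⟩ _ => ?_
  cases b <;> simp [letterVal]

variable [LinearOrder G]

def positiveAut (x : Fin n → G) : BAut n :=
  (Finset.univ.filter (1 < letterVal x ·), fun _ => Finset.univ.filter (1 ≤ letterVal x ·))

@[simp]
theorem mem_positiveAut_fst {x : Fin n → G} {s : Letter n} :
    s ∈ (positiveAut x).1 ↔ 1 < letterVal x s :=
  Finset.mem_filter_univ s

@[simp]
theorem mem_positiveAut_snd {x : Fin n → G} {s t : Letter n} :
    t ∈ (positiveAut x).2 s ↔ 1 ≤ letterVal x t :=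
  Finset.mem_filter_univ t

variable [MulLeftMono G]

theorem exists_one_le_letterVal (x : Fin n → G) (i : Fin n) : ∃ b, 1 ≤ letterVal x (i, b) := by
  rcases le_total 1 (x i) with h | h
  · exact ⟨true, h⟩
  · exact ⟨false, Left.one_le_inv_iff.mpr h⟩

theorem halfLarge_positiveAut {x : Fin n → G} (hx : ∃ i, x i ≠ 1) : HalfLarge (positiveAut x) := by
  obtain ⟨i, hi⟩ := hx
  refine ⟨?_, fun s => ?_⟩
  · rcases hi.lt_or_gt with h | h
    · exact ⟨(i, false), by simpa [letterVal] using h⟩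
    · exact ⟨(i, true), by simpa [letterVal] using h⟩
  · choose b hb using exists_one_le_letterVal x
    simpa using Finset.card_le_card_of_injOn (s := Finset.univ) (t := (positiveAut x).2 s)
      (fun i => (i, b i)) (fun i _ => mem_positiveAut_snd.mpr (hb i))
      (fun _ _ _ _ h => congrArg Prod.fst h)

theorem one_lt_prod_of_inLang_positiveAut {x : Fin n → G} {w : List (Letter n)}
    (hw : InLang (positiveAut x) w) : 1 < (w.map (letterVal x)).prod := by
  obtain ⟨s, t, rfl, hs, ht⟩ := exists_cons_of_inLang_const hw
  rw [List.map_cons, List.prod_cons]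
  refine one_lt_mul_of_lt_of_le' (by simpa using hs) (List.one_le_prod_of_one_le ?_)
  exact List.forall_mem_map.mpr fun y hy => by simpa using ht y hy

end LetterValue

/-- If the relator set `R` of `G = ⟨S | R⟩` meets the language of every ½-large
b-automaton over `S`, then `G` is trivial or not left-orderable. -/
theorem stmt_7 {n : ℕ} (R : Set (FreeGroup (Fin n)))
    (hR : ∀ A : BAut n, HalfLarge A → ∃ w : List (Letter n), InLang A w ∧ toFree w ∈ R) :
    (∀ g : PresentedGroup R, g = 1) ∨ ¬ LeftOrderable (PresentedGroup R) := by
  refine or_iff_not_imp_left.mpr fun htriv hlo => ?_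
  obtain ⟨_, _⟩ := hlo.exists_linearOrder
  obtain ⟨w, hw, hwR⟩ := hR (positiveAut (PresentedGroup.mk R ∘ FreeGroup.of))
    (halfLarge_positiveAut (PresentedGroup.exists_of_ne_one (not_forall.mp htriv)))
  have hpos := one_lt_prod_of_inLang_positiveAut hw
  rw [← map_toFree, PresentedGroup.one_of_mem hwR] at hpos
  exact hpos.false
end

section
/- Let S = {a₁,…,aₙ} and let R be a set of words over S^± that intersects the language of every ½-large b-automaton over S. Then for every choice of signs ε₁,…,εₙ ∈ {-1,1} and every index i ∈ {1,…,n}, there exists a non-empty reduced word w ∈ R consisting only of letters from {a₁^{ε₁},…,aₙ^{εₙ}} and containing at least one occurrence of a_i^{ε_i}. -/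
/-- The formal inverse of a letter. -/
def Letter.inv {n : ℕ} (s : Letter n) : Letter n := (s.1, !s.2)

/-- A word is reduced if no two consecutive letters are mutually inverse. -/
def Reduced {n : ℕ} (w : List (Letter n)) : Prop :=
  List.Chain' (fun s s' => s' ≠ s.inv) w

section

variable {n : ℕ}

theorem InLang.exists_mem_start {A : BAut n} {w : List (Letter n)} (hw : InLang A w) :
    ∃ a ∈ A.1, a ∈ w :=
  ⟨w.head hw.1, hw.2.1 _ (List.head?_eq_some_head hw.1), List.head_mem hw.1⟩

theorem InLang.forall_mem {A : BAut n} {w : List (Letter n)} {T : Finset (Letter n)}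
    (hw : InLang A w) (hstart : A.1 ⊆ T) (hstep : ∀ s, A.2 s ⊆ T) : ∀ s ∈ w, s ∈ T :=
  hw.2.2.induction (· ∈ T) w (fun _ _ hxy _ => hstep _ hxy)
    fun hne => hstart (hw.2.1 _ (List.head?_eq_some_head hne))

theorem reduced_of_forall_mem {T : Finset (Letter n)} (hT : ∀ s ∈ T, s.inv ∉ T)
    {w : List (Letter n)} (hw : ∀ s ∈ w, s ∈ T) : Reduced w :=
  (List.pairwise_of_forall_mem_list fun s hs s' hs' (hinv : s' = s.inv) =>
    hT s (hw s hs) (hinv ▸ hw s' hs')).isChain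

def signedLetters (ε : Fin n → Bool) : Finset (Letter n) :=
  Finset.univ.map ⟨fun j => (j, ε j), Function.LeftInverse.injective (g := Prod.fst) fun _ => rfl⟩

theorem mem_signedLetters {ε : Fin n → Bool} {s : Letter n} :
    s ∈ signedLetters ε ↔ ∃ j, s = (j, ε j) := by
  simp [signedLetters, eq_comm]

theorem card_signedLetters (ε : Fin n → Bool) : (signedLetters ε).card = n := by
  simp [signedLetters]

theorem inv_notMem_signedLetters {ε : Fin n → Bool} :
    ∀ s ∈ signedLetters ε, s.inv ∉ signedLetters ε := by
  simp [mem_signedLetters, Letter.inv]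

def signedAut (ε : Fin n → Bool) (i : Fin n) : BAut n :=
  ({(i, ε i)}, fun _ => signedLetters ε)

theorem halfLarge_signedAut (ε : Fin n → Bool) (i : Fin n) : HalfLarge (signedAut ε i) :=
  ⟨Finset.singleton_nonempty _, fun _ => (card_signedLetters ε).ge⟩

end

/-- If `R` meets the language of every ½-large b-automaton, then for every choice
of signs `ε` and every index `i` there is a non-empty reduced word `w ∈ R`
consisting only of letters `a_j^{ε_j}` with at least one occurrence of `a_i^{ε_i}`. -/
theorem stmt_8 {n : ℕ} (R : Set (List (Letter n)))
    (hR : ∀ A : BAut n, HalfLarge A → ∃ w ∈ R, InLang A w)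
    (ε : Fin n → Bool) (i : Fin n) :
    ∃ w ∈ R, w ≠ [] ∧ Reduced w ∧ (∀ s ∈ w, ∃ j : Fin n, s = (j, ε j)) ∧
      (i, ε i) ∈ w := by
  obtain ⟨w, hwR, hw⟩ := hR (signedAut ε i) (halfLarge_signedAut ε i)
  have hsigned : ∀ s ∈ w, s ∈ signedLetters ε :=
    hw.forall_mem (by simp [signedAut, mem_signedLetters]) fun _ => subset_rfl
  obtain ⟨a, ha, haw⟩ := hw.exists_mem_start
  refine ⟨w, hwR, hw.1, reduced_of_forall_mem inv_notMem_signedLetters hsigned,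
    fun s hs => mem_signedLetters.1 (hsigned s hs), ?_⟩
  rwa [← Finset.mem_singleton.1 ha]
end

section
/- Let G = ⟨S | R⟩ be a group generated by a finite set S (as images of free group generators) and let B ≥ 1. Let H ≤ G be the subgroup generated by all elements represented by reduced words of length B over S. Then H has finite index in G; in fact [G : H] is at most the number of elements of G represented by reduced words of length at most B. -/
/-!
Split a reduced word of length `L` as `u v` with `|u| = L mod B`. Since subwords of reduced
words are reduced, `v` is a product of reduced words of length `B`, so `v ∈ H` and every coset
of `H` contains the image of a reduced word of length less than `B`.
-/

theorem Subgroup.index_ne_zero_and_le_card_of_forall_exists_inv_mul_mem {G : Type*} [Group G]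
    {H : Subgroup G} {T : Set G} [Finite T] (hcover : ∀ g : G, ∃ t ∈ T, t⁻¹ * g ∈ H) :
    H.index ≠ 0 ∧ H.index ≤ Nat.card T := by
  have hsurj : Function.Surjective fun t : T => (t : G ⧸ H) := by
    rintro ⟨g⟩
    obtain ⟨t, ht, htg⟩ := hcover g
    exact ⟨⟨t, ht⟩, QuotientGroup.eq.2 htg⟩
  have : Finite (G ⧸ H) := Finite.of_surjective _ hsurj
  exact ⟨index_ne_zero_of_finite, Nat.card_le_card_of_surjective _ hsurj⟩

namespace FreeGroup

variable {α : Type*} [DecidableEq α]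

theorem toWord_mk_take (x : FreeGroup α) (k : ℕ) :
    (mk (x.toWord.take k)).toWord = x.toWord.take k := by
  rw [toWord_mk]
  exact (isReduced_toWord.infix (List.take_prefix k _).isInfix).reduce_eq

theorem toWord_mk_drop (x : FreeGroup α) (k : ℕ) :
    (mk (x.toWord.drop k)).toWord = x.toWord.drop k := by
  rw [toWord_mk]
  exact (isReduced_toWord.infix (List.drop_suffix k _).isInfix).reduce_eq

theorem mk_take_mul_mk_drop (x : FreeGroup α) (k : ℕ) :
    mk (x.toWord.take k) * mk (x.toWord.drop k) = x := by
  rw [mul_mk, List.take_append_drop, mk_toWord]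

theorem mem_closure_length_eq_of_length_eq_mul {B : ℕ} :
    ∀ (k : ℕ) (x : FreeGroup α), x.toWord.length = B * k →
      x ∈ Subgroup.closure {w : FreeGroup α | w.toWord.length = B}
  | 0, x, hx => by
    rw [toWord_eq_nil_iff.1 (List.eq_nil_of_length_eq_zero hx)]
    exact one_mem _
  | k + 1, x, hx => by
    rw [← mk_take_mul_mk_drop x B]
    refine mul_mem (Subgroup.subset_closure ?_)
      (mem_closure_length_eq_of_length_eq_mul k _ ?_)
    · simp only [Set.mem_ofPred_eq, toWord_mk_take, List.length_take]
      rw [hx, Nat.mul_succ]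
      omega
    · rw [toWord_mk_drop, List.length_drop, hx, Nat.mul_succ, Nat.add_sub_cancel]

theorem exists_length_lt_inv_mul_mem_closure {B : ℕ} (hB : 0 < B) (x : FreeGroup α) :
    ∃ u : FreeGroup α, u.toWord.length < B ∧
      u⁻¹ * x ∈ Subgroup.closure {w : FreeGroup α | w.toWord.length = B} := by
  set L := x.toWord.length
  refine ⟨mk (x.toWord.take (L % B)), ?_, ?_⟩
  · rw [toWord_mk_take, List.length_take]
    exact (min_le_left _ _).trans_lt (Nat.mod_lt L hB)
  · rw [inv_mul_eq_of_eq_mul (mk_take_mul_mk_drop x (L % B)).symm]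
    refine mem_closure_length_eq_of_length_eq_mul (L / B) _ ?_
    rw [toWord_mk_drop, List.length_drop]
    have := Nat.div_add_mod L B
    omega

theorem finite_setOf_toWord_length_le [Finite α] (B : ℕ) :
    {w : FreeGroup α | w.toWord.length ≤ B}.Finite :=
  (List.finite_length_le _ B).preimage toWord_injective.injOn

end FreeGroup

/-- Let `G = ⟨S | R⟩` with `S` of size `n`, `B ≥ 1`, and let `H` be the subgroup
generated by the elements of `G` represented by reduced words of length `B`.
Then `H` has finite index in `G`, bounded by the number of elements of `G`
represented by reduced words of length at most `B`. -/
theorem stmt_11 {n : ℕ} (R : Set (FreeGroup (Fin n))) (B : ℕ) (hB : 1 ≤ B)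
    (H : Subgroup (PresentedGroup R))
    (hH : H = Subgroup.closure
      (PresentedGroup.mk R '' {w : FreeGroup (Fin n) | w.toWord.length = B})) :
    H.index ≠ 0 ∧
      H.index ≤ Nat.card
        (PresentedGroup.mk R '' {w : FreeGroup (Fin n) | w.toWord.length ≤ B}) := by
  have : Finite (PresentedGroup.mk R '' {w : FreeGroup (Fin n) | w.toWord.length ≤ B}) :=
    ((FreeGroup.finite_setOf_toWord_length_le B).image _).to_subtype
  refine Subgroup.index_ne_zero_and_le_card_of_forall_exists_inv_mul_mem fun g => ?_
  obtain ⟨x, rfl⟩ := PresentedGroup.mk_surjective R g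
  obtain ⟨u, hu, hux⟩ := FreeGroup.exists_length_lt_inv_mul_mem_closure hB x
  refine ⟨PresentedGroup.mk R u, ⟨u, hu.le, rfl⟩, ?_⟩
  rw [hH, ← MonoidHom.map_closure, ← map_inv, ← map_mul]
  exact Subgroup.mem_map_of_mem _ hux
end
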